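/- Let N, M ≥ 1, let the channel be grid-aligned: H = Σ_{p=1}^{N_P} α_p · a_N(x_{n_p}^{(N)}) · (a_M(x_{m_p}^{(M)}))ᴴ ∈ ℂ^{N×M} with gains α_p ∈ ℂ and grid indices n_p ∈ {0,…,N−1}, m_p ∈ {0,…,M−1}. Let C̃ ∈ ℂ^{N×N_e} and P̃ ∈ ℂ^{M×M_e} be selection matrices whose columns are standard basis vectors: the i-th column of C̃ is e_{ν_i} and the j-th column of P̃ is e_{μ_j}. Define the antenna-domain receiving and precoding matrices C = A_N·C̃ and P = A_M·P̃. Then the effective probed channel satisfies, for all i, j, (Cᴴ H P)_{i,j} = Σ_{p : n_p = ν_i and m_p = μ_j} α_p. In particular, if the pairs (n_p, m_p) are pairwise distinct and every pair (n_p, m_p) occurs among the selected pairs (ν_i, μ_j), the low-dimensional effective channel Cᴴ H P contains every path gain α_p exactly once. -/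
import Mathlib


open Complex Matrix

/-- Normalized steering vector of a half-wavelength ULA with `M` antennas:
`(a_M(x))_k = (1/√M)·exp(−i·k·x)`. -/
noncomputable def steer (M : ℕ) (x : ℝ) : Fin M → ℂ :=
  fun k => (1 / (Real.sqrt M : ℂ)) * Complex.exp (-Complex.I * ((k : ℕ) : ℂ) * (x : ℂ))

/-- Beam grid angle `x_m^{(M)} = π(2m/M − 1)`. -/
noncomputable def beamAngle (M : ℕ) (m : Fin M) : ℝ :=
  Real.pi * (2 * ((m : ℕ) : ℝ) / (M : ℝ) - 1)

/-- Beam-domain sampling matrix with `m`-th column `a_M(x_m^{(M)})`. -/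
noncomputable def samplingMatrix (M : ℕ) : Matrix (Fin M) (Fin M) ℂ :=
  Matrix.of fun k m => steer M (beamAngle M m) k

lemma steer_orth (M : ℕ) (hM : 1 ≤ M) (m m' : Fin M) :
    ∑ k : Fin M, (starRingEnd ℂ) (steer M (beamAngle M m) k) * steer M (beamAngle M m') k
      = if m = m' then 1 else 0 := by
  have hM0 : (M : ℝ) ≠ 0 := by positivity
  have hMc : (M : ℂ) ≠ 0 := Nat.cast_ne_zero.mpr (by omega)
  set z : ℂ := Complex.exp (((((m:ℕ):ℂ) - ((m':ℕ):ℂ)) * (2 * (Real.pi:ℂ) * Complex.I)) / (M:ℂ)) with hz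
  have hterm : ∀ k : Fin M,
      (starRingEnd ℂ) (steer M (beamAngle M m) k) * steer M (beamAngle M m') k
        = (1 / (M:ℂ)) * z ^ (k:ℕ) := by
    intro k
    unfold steer
    rw [hz, ← Complex.exp_nat_mul, _root_.map_mul, ← Complex.exp_conj]
    have h1 : (starRingEnd ℂ) (1 / (Real.sqrt M : ℂ)) = 1 / (Real.sqrt M : ℂ) := by
      simp [Complex.conj_ofReal]
    have h2 : (starRingEnd ℂ) (-Complex.I * ((k:ℕ):ℂ) * ((beamAngle M m : ℝ):ℂ))
        = Complex.I * ((k:ℕ):ℂ) * ((beamAngle M m : ℝ):ℂ) := by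
      simp [_root_.map_mul, Complex.conj_I, Complex.conj_ofReal]
    rw [h1, h2]
    have hsq : (1 / (Real.sqrt M : ℂ)) * (1 / (Real.sqrt M : ℂ)) = 1 / (M:ℂ) := by
      rw [div_mul_div_comm, one_mul, ← Complex.ofReal_mul,
        Real.mul_self_sqrt (by positivity)]
      norm_cast
    have harg : Complex.I * ((k:ℕ):ℂ) * ((beamAngle M m : ℝ):ℂ)
        + (-Complex.I * ((k:ℕ):ℂ) * ((beamAngle M m' : ℝ):ℂ))
        = ((k:ℕ):ℂ) * (((((m:ℕ):ℂ) - ((m':ℕ):ℂ)) * (2 * (Real.pi:ℂ) * Complex.I)) / (M:ℂ)) := by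
      unfold beamAngle
      push_cast
      field_simp
      ring
    calc (1 / (Real.sqrt M : ℂ)) * Complex.exp (Complex.I * ((k:ℕ):ℂ) * ((beamAngle M m : ℝ):ℂ))
          * ((1 / (Real.sqrt M : ℂ)) * Complex.exp (-Complex.I * ((k:ℕ):ℂ) * ((beamAngle M m' : ℝ):ℂ)))
        = (1 / (Real.sqrt M : ℂ)) * (1 / (Real.sqrt M : ℂ))
          * Complex.exp (Complex.I * ((k:ℕ):ℂ) * ((beamAngle M m : ℝ):ℂ)
            + (-Complex.I * ((k:ℕ):ℂ) * ((beamAngle M m' : ℝ):ℂ))) := by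
          rw [Complex.exp_add]; ring
      _ = (1 / (M:ℂ)) * Complex.exp (((k:ℕ):ℂ) * (((((m:ℕ):ℂ) - ((m':ℕ):ℂ)) * (2 * (Real.pi:ℂ) * Complex.I)) / (M:ℂ))) := by
          rw [hsq, harg]
  rw [Finset.sum_congr rfl (fun k _ => hterm k), ← Finset.mul_sum]
  rw [Fin.sum_univ_eq_sum_range (fun k => z ^ k)]
  by_cases h : m = m'
  · subst h
    have : z = 1 := by rw [hz]; simp
    simp [this, hMc]
  · have hzM : z ^ M = 1 := by
      rw [hz, ← Complex.exp_nat_mul]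
      have harg2 : (M:ℂ) * (((((m:ℕ):ℂ) - ((m':ℕ):ℂ)) * (2 * (Real.pi:ℂ) * Complex.I)) / (M:ℂ))
          = ((((m:ℕ):ℤ) - ((m':ℕ):ℤ) : ℤ) : ℂ) * (2 * (Real.pi:ℂ) * Complex.I) := by
        push_cast; field_simp
      rw [harg2, Complex.exp_int_mul_two_pi_mul_I]
    have hz1 : z ≠ 1 := by
      intro hzeq
      rw [hz, Complex.exp_eq_one_iff] at hzeq
      obtain ⟨n, hn⟩ := hzeq
      have h2pi : (2 * (Real.pi:ℂ) * Complex.I) ≠ 0 := by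
        simp [Complex.I_ne_zero, Real.pi_ne_zero, Complex.ofReal_ne_zero]
      have hn2 : (((m:ℕ):ℂ) - ((m':ℕ):ℂ)) * (2 * (Real.pi:ℂ) * Complex.I)
          = ((n:ℂ) * (M:ℂ)) * (2 * (Real.pi:ℂ) * Complex.I) := by
        have := (div_eq_iff hMc).mp hn
        linear_combination this
      have hcc : (((m:ℕ):ℂ) - ((m':ℕ):ℂ)) = (n:ℂ) * (M:ℂ) := mul_right_cancel₀ h2pi hn2
      have hint : ((m:ℕ):ℤ) - ((m':ℕ):ℤ) = n * (M:ℤ) := by exact_mod_cast hcc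
      have h1 : ((m:ℕ):ℤ) < M := by exact_mod_cast m.isLt
      have h2 : ((m':ℕ):ℤ) < M := by exact_mod_cast m'.isLt
      have h3 : ((m:ℕ):ℤ) ≠ ((m':ℕ):ℤ) := by
        simpa [Fin.ext_iff] using h
      have h0m : (0:ℤ) ≤ ((m:ℕ):ℤ) := Int.ofNat_nonneg _
      have h0m' : (0:ℤ) ≤ ((m':ℕ):ℤ) := Int.ofNat_nonneg _
      have hM1 : (1:ℤ) ≤ (M:ℤ) := by exact_mod_cast hM
      rcases lt_trichotomy n 0 with hn' | hn' | hn'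
      · have : n * (M:ℤ) ≤ -M := by nlinarith
        linarith
      · rw [hn'] at hint; simp at hint; omega
      · have : (M:ℤ) ≤ n * M := by nlinarith
        linarith
    rw [geom_sum_eq hz1, hzM]
    simp [h]

lemma sandwich_entry {N M Ne Me : ℕ} (A : Matrix (Fin N) (Fin Ne) ℂ)
    (u : Fin N → ℂ) (v : Fin M → ℂ) (B : Matrix (Fin M) (Fin Me) ℂ)
    (i : Fin Ne) (j : Fin Me) :
    (Aᴴ * Matrix.vecMulVec u v * B) i j
      = (∑ n, (starRingEnd ℂ) (A n i) * u n) * (∑ m, v m * B m j) := by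
  rw [Finset.sum_mul_sum, Finset.sum_comm]
  simp only [Matrix.mul_apply, Matrix.conjTranspose_apply, Matrix.vecMulVec_apply,
    RCLike.star_def, Finset.sum_mul]
  exact Finset.sum_congr rfl fun m _ => Finset.sum_congr rfl fun n _ => by ring

/-- For a grid-aligned multipath channel
`H = Σ_p α_p · a_N(x_{n_p}) · a_M(x_{m_p})ᴴ` and IMBA beam-selection matrices
`C = A_N C̃`, `P = A_M P̃` (with `C̃`, `P̃` formed from standard basis columns `e_{ν_i}`,
`e_{μ_j}`), the low-dimensional effective channel satisfies
`(Cᴴ H P)_{i,j} = Σ_{p : n_p = ν_i, m_p = μ_j} α_p`; in particular, if the beam pairs of the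
paths are pairwise distinct and every pair `(n_p, m_p)` is selected, then each path gain `α_p`
appears exactly once in `Cᴴ H P`. -/
theorem effective_channel_contains_path_gains
    (N M NP Ne Me : ℕ) (hN : 1 ≤ N) (hM : 1 ≤ M)
    (α : Fin NP → ℂ) (np : Fin NP → Fin N) (mp : Fin NP → Fin M)
    (H : Matrix (Fin N) (Fin M) ℂ)
    (hH : H = ∑ p : Fin NP, α p •
        Matrix.vecMulVec (steer N (beamAngle N (np p)))
          (star (steer M (beamAngle M (mp p)))))
    (ν : Fin Ne → Fin N) (μ : Fin Me → Fin M)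
    (Ct : Matrix (Fin N) (Fin Ne) ℂ)
    (hCt : ∀ (n : Fin N) (i : Fin Ne), Ct n i = if n = ν i then 1 else 0)
    (Pt : Matrix (Fin M) (Fin Me) ℂ)
    (hPt : ∀ (m : Fin M) (j : Fin Me), Pt m j = if m = μ j then 1 else 0)
    (C : Matrix (Fin N) (Fin Ne) ℂ) (hC : C = samplingMatrix N * Ct)
    (P : Matrix (Fin M) (Fin Me) ℂ) (hP : P = samplingMatrix M * Pt) :
    (∀ (i : Fin Ne) (j : Fin Me),
        (Cᴴ * H * P) i j
          = ∑ p ∈ Finset.univ.filter (fun p : Fin NP => np p = ν i ∧ mp p = μ j), α p) ∧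
      (Function.Injective (fun p : Fin NP => (np p, mp p)) →
        ∀ (p : Fin NP) (i : Fin Ne) (j : Fin Me), ν i = np p → μ j = mp p →
          (Cᴴ * H * P) i j = α p) := by
  have hCcol : ∀ (n : Fin N) (i : Fin Ne), C n i = steer N (beamAngle N (ν i)) n := by
    intro n i
    rw [hC]
    simp only [Matrix.mul_apply, samplingMatrix, Matrix.of_apply, hCt, mul_ite, mul_one, mul_zero]
    rw [Finset.sum_ite_eq' Finset.univ (ν i) (fun n' => steer N (beamAngle N n') n)]
    simp
  have hPcol : ∀ (m : Fin M) (j : Fin Me), P m j = steer M (beamAngle M (μ j)) m := by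
    intro m j
    rw [hP]
    simp only [Matrix.mul_apply, samplingMatrix, Matrix.of_apply, hPt, mul_ite, mul_one, mul_zero]
    rw [Finset.sum_ite_eq' Finset.univ (μ j) (fun m' => steer M (beamAngle M m') m)]
    simp
  have key : ∀ (i : Fin Ne) (j : Fin Me),
      (Cᴴ * H * P) i j
        = ∑ p ∈ Finset.univ.filter (fun p : Fin NP => np p = ν i ∧ mp p = μ j), α p := by
    intro i j
    rw [hH, Matrix.mul_sum, Matrix.sum_mul]
    simp only [Matrix.mul_smul, Matrix.smul_mul, Matrix.sum_apply, Matrix.smul_apply,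
      smul_eq_mul]
    rw [Finset.sum_filter]
    refine Finset.sum_congr rfl fun p _ => ?_
    rw [sandwich_entry]
    simp only [hCcol, hPcol, Pi.star_apply, RCLike.star_def]
    rw [steer_orth N hN (ν i) (np p), steer_orth M hM (mp p) (μ j)]
    by_cases h1 : np p = ν i <;> by_cases h2 : mp p = μ j <;>
      simp [h1, h2, eq_comm]
  refine ⟨key, fun hinj p i j h1 h2 => ?_⟩
  rw [key i j]
  have hset : Finset.univ.filter (fun q : Fin NP => np q = ν i ∧ mp q = μ j) = {p} := by
    ext q
    simp only [Finset.mem_filter, Finset.mem_univ, true_and, Finset.mem_singleton]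
    constructor
    · rintro ⟨hq1, hq2⟩
      exact hinj (by simp [Prod.ext_iff, hq1, hq2, ← h1, ← h2])
    · rintro rfl
      exact ⟨h1.symm, h2.symm⟩
  rw [hset, Finset.sum_singleton]
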